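/- arXiv:2406.02829 — 2 statements merged into one kernel-verified Lean document; each statement's English description precedes it below -/
import Mathlib

section
/- The class ${}^{\perp_0}\mathbb{Z}$ is not decomposable: there is no cardinal $\kappa$ such that every abelian group $A$ with $\mathrm{Hom}(A,\mathbb{Z})=0$ is the internal direct sum of a family of subgroups, each of cardinality less than $\kappa$ and each having trivial homomorphism group into $\mathbb{Z}$. -/
universe u

open Cardinal DirectSum Finset Function

namespace PerpZAux

abbrev P : Type := ∀ n : ℕ, ZMod (2 ^ n)

def S : AddSubgroup P where
  carrier := {f | ∀ n : ℕ,
    ZMod.castHom (pow_dvd_pow 2 (Nat.le_succ n)) (ZMod (2 ^ n)) (f (n + 1)) = f n}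
  add_mem' := by
    intro a b ha hb n
    simp only [Pi.add_apply, map_add, ha n, hb n]
  zero_mem' := by intro n; simp
  neg_mem' := by
    intro a ha n
    simp only [Pi.neg_apply, map_neg, ha n]

abbrev Z2 : Type := ↥S

lemma nsmul_two_pow_eq_zero {n k : ℕ} (h : n ≤ k) (z : ZMod (2 ^ n)) :
    (2 ^ k : ℕ) • z = 0 := by
  rw [nsmul_eq_mul]
  have h0 : ((2 ^ k : ℕ) : ZMod (2 ^ n)) = 0 := by
    rw [ZMod.natCast_eq_zero_iff]
    exact pow_dvd_pow 2 h
  rw [h0, zero_mul]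

/-- The sum `∑ k, 2^k • Y k`, defined coordinatewise (the sum is finite in each coordinate). -/
def serY (Y : ℕ → Z2) : Z2 :=
  ⟨fun n => ∑ k ∈ range n, (2 ^ k : ℕ) • (Y k).1 n, by
    intro n
    rw [map_sum]
    have h1 : ∀ k, (ZMod.castHom (pow_dvd_pow 2 (Nat.le_succ n)) (ZMod (2 ^ n)))
        ((2 ^ k : ℕ) • (Y k).1 (n + 1)) = (2 ^ k : ℕ) • (Y k).1 n := by
      intro k
      rw [map_nsmul, (Y k).2 n]
    rw [Finset.sum_congr rfl (fun k _ => h1 k), Finset.sum_range_succ,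
      nsmul_two_pow_eq_zero le_rfl, add_zero]⟩

lemma serY_coord (Y : ℕ → Z2) (n : ℕ) :
    (serY Y).1 n = ∑ k ∈ range n, (2 ^ k : ℕ) • (Y k).1 n := rfl

lemma sum_range_add' {M : Type*} [AddCommMonoid M] (f : ℕ → M) (m n : ℕ) :
    ∑ i ∈ range (m + n), f i = (∑ i ∈ range m, f i) + ∑ i ∈ range n, f (m + i) := by
  induction n with
  | zero => simp
  | succ n ih =>
      rw [Nat.add_succ, Finset.sum_range_succ, ih, Finset.sum_range_succ, add_assoc]

lemma serY_sub (Y : ℕ → Z2) (m : ℕ) :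
    serY Y - ∑ k ∈ range m, (2 ^ k : ℕ) • Y k = (2 ^ m : ℕ) • serY (fun t => Y (m + t)) := by
  apply Subtype.ext
  funext n
  have hL : ((serY Y - ∑ k ∈ range m, (2 ^ k : ℕ) • Y k : Z2) : P) n
      = (∑ k ∈ range n, (2 ^ k : ℕ) • (Y k).1 n) - ∑ k ∈ range m, (2 ^ k : ℕ) • (Y k).1 n := by
    push_cast
    simp [serY_coord]
  have hR : (((2 ^ m : ℕ) • serY (fun t => Y (m + t)) : Z2) : P) n
      = ∑ t ∈ range n, (2 ^ (m + t) : ℕ) • (Y (m + t)).1 n := by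
    push_cast
    rw [Pi.smul_apply, serY_coord, Finset.smul_sum]
    exact Finset.sum_congr rfl fun t _ => by rw [smul_smul, ← pow_add]
  rw [hL, hR]
  set h : ℕ → ZMod (2 ^ n) := fun k => (2 ^ k : ℕ) • (Y k).1 n with hh
  have hzero : ∀ k, n ≤ k → h k = 0 := fun k hk => nsmul_two_pow_eq_zero hk _
  have e1 : ∑ k ∈ range n, h k = ∑ k ∈ range (m + n), h k := by
    apply Finset.sum_subset (Finset.range_subset_range.mpr (Nat.le_add_left n m))
    intro x _ hx
    exact hzero x (le_of_not_gt (fun hc => hx (Finset.mem_range.mpr hc)))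
  rw [e1, sum_range_add' h m n, add_sub_cancel_left]

lemma z2_haus (x : Z2) (h : ∀ m : ℕ, ∃ y : Z2, x = (2 ^ m : ℕ) • y) : x = 0 := by
  apply Subtype.ext
  funext n
  obtain ⟨y, hy⟩ := h n
  have : (x : P) n = (2 ^ n : ℕ) • (y : P) n := by rw [hy]; rfl
  rw [this, nsmul_two_pow_eq_zero le_rfl]
  rfl

lemma coord_le (x : Z2) (n t : ℕ) :
    ZMod.castHom (pow_dvd_pow 2 (Nat.le_add_right n t)) (ZMod (2 ^ n)) ((x : P) (n + t))
      = (x : P) n := by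
  induction t with
  | zero =>
      have h := RingHom.ext_zmod
        (ZMod.castHom (pow_dvd_pow 2 (Nat.le_add_right n 0)) (ZMod (2 ^ n)))
        (RingHom.id (ZMod (2 ^ n)))
      rw [h]; rfl
  | succ t ih =>
      have hc := ZMod.castHom_comp (pow_dvd_pow 2 (Nat.le_add_right n t))
        (pow_dvd_pow 2 (Nat.le_succ (n + t)))
      calc ZMod.castHom (pow_dvd_pow 2 (Nat.le_add_right n (t+1))) (ZMod (2 ^ n))
            ((x : P) (n + t + 1))
          = ((ZMod.castHom (pow_dvd_pow 2 (Nat.le_add_right n t)) (ZMod (2 ^ n))).comp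
              (ZMod.castHom (pow_dvd_pow 2 (Nat.le_succ (n + t))) (ZMod (2 ^ (n + t)))))
              ((x : P) (n + t + 1)) := by rw [hc]
        _ = ZMod.castHom (pow_dvd_pow 2 (Nat.le_add_right n t)) (ZMod (2 ^ n))
              ((x : P) (n + t)) := by rw [RingHom.comp_apply, x.2 (n + t)]
        _ = (x : P) n := ih

lemma cast_kill {n j : ℕ} (z : ZMod (2 ^ (n + j))) (hz : (2 ^ j : ℕ) • z = 0) :
    ZMod.castHom (pow_dvd_pow 2 (Nat.le_add_right n j)) (ZMod (2 ^ n)) z = 0 := by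
  haveI : NeZero (2 ^ (n + j)) := ⟨pow_ne_zero _ two_ne_zero⟩
  have h1 : ((2 ^ j * z.val : ℕ) : ZMod (2 ^ (n + j))) = 0 := by
    rw [Nat.cast_mul, ZMod.natCast_zmod_val, ← nsmul_eq_mul]
    exact hz
  rw [ZMod.natCast_eq_zero_iff] at h1
  have h2 : 2 ^ n ∣ z.val := by
    have h1' : 2 ^ j * 2 ^ n ∣ 2 ^ j * z.val := by
      rw [← pow_add, Nat.add_comm j n]; exact h1
    exact (Nat.mul_dvd_mul_iff_left (pow_pos (by norm_num : (0:ℕ) < 2) j)).mp h1'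
  obtain ⟨w, hw⟩ := h2
  have h3 : z = ((z.val : ℕ) : ZMod (2 ^ (n + j))) := (ZMod.natCast_zmod_val z).symm
  rw [h3, map_natCast, hw]
  rw [ZMod.natCast_eq_zero_iff]
  exact dvd_mul_right _ _

lemma z2_tf {j : ℕ} (x : Z2) (hx : (2 ^ j : ℕ) • x = 0) : x = 0 := by
  apply Subtype.ext
  funext n
  have h1 : (2 ^ j : ℕ) • (x : P) (n + j) = 0 := by
    have h := congrArg (fun z : Z2 => (z : P) (n + j)) hx
    simpa using h
  have h2 := cast_kill ((x : P) (n + j)) h1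
  rw [coord_le x n j] at h2
  simpa using h2


lemma coprime3 (n : ℕ) : Nat.Coprime 3 (2 ^ n) :=
  Nat.Coprime.pow_right _ (by decide)

lemma three_mul_inv (n : ℕ) :
    (3 : ZMod (2 ^ n)) * ((ZMod.unitOfCoprime 3 (coprime3 n))⁻¹ : (ZMod (2 ^ n))ˣ) = 1 := by
  have h : ((ZMod.unitOfCoprime 3 (coprime3 n) : (ZMod (2 ^ n))ˣ) : ZMod (2 ^ n)) = 3 := by
    rw [ZMod.coe_unitOfCoprime]; push_cast; ring
  calc (3 : ZMod (2 ^ n)) * ((ZMod.unitOfCoprime 3 (coprime3 n))⁻¹ : (ZMod (2 ^ n))ˣ)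
      = ((ZMod.unitOfCoprime 3 (coprime3 n) : (ZMod (2 ^ n))ˣ) : ZMod (2 ^ n))
        * ((ZMod.unitOfCoprime 3 (coprime3 n))⁻¹ : (ZMod (2 ^ n))ˣ) := by rw [h]
    _ = 1 := by rw [← Units.val_mul]; simp

lemma z2_div3 (x : Z2) : ∃ y : Z2, (3 : ℕ) • y = x := by
  have compat : ∀ n, ZMod.castHom (pow_dvd_pow 2 (Nat.le_succ n)) (ZMod (2 ^ n))
      (((ZMod.unitOfCoprime 3 (coprime3 (n+1)))⁻¹ : (ZMod (2 ^ (n+1)))ˣ) * (x : P) (n + 1))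
      = ((ZMod.unitOfCoprime 3 (coprime3 n))⁻¹ : (ZMod (2 ^ n))ˣ) * (x : P) n := by
    intro n
    rw [map_mul, x.2 n]
    congr 1
    -- both are inverses of 3
    have hA : (3 : ZMod (2 ^ n)) * (ZMod.castHom (pow_dvd_pow 2 (Nat.le_succ n)) (ZMod (2 ^ n))
        (((ZMod.unitOfCoprime 3 (coprime3 (n+1)))⁻¹ : (ZMod (2 ^ (n+1)))ˣ) : ZMod (2 ^ (n+1)))) = 1 := by
      rw [show (3 : ZMod (2 ^ n)) = ZMod.castHom (pow_dvd_pow 2 (Nat.le_succ n)) (ZMod (2 ^ n))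
        (3 : ZMod (2 ^ (n+1))) by rw [map_ofNat]]
      rw [← map_mul, three_mul_inv (n+1), map_one]
    have hB : (3 : ZMod (2 ^ n))
        * ((ZMod.unitOfCoprime 3 (coprime3 n))⁻¹ : (ZMod (2 ^ n))ˣ) = 1 := three_mul_inv n
    -- cancel
    set a := (ZMod.castHom (pow_dvd_pow 2 (Nat.le_succ n)) (ZMod (2 ^ n))
        (((ZMod.unitOfCoprime 3 (coprime3 (n+1)))⁻¹ : (ZMod (2 ^ (n+1)))ˣ) : ZMod (2 ^ (n+1))))
    set b := (((ZMod.unitOfCoprime 3 (coprime3 n))⁻¹ : (ZMod (2 ^ n))ˣ) : ZMod (2 ^ n))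
    calc a = (3 * b) * a := by rw [hB, one_mul]
      _ = b * (3 * a) := by ring
      _ = b := by rw [hA, mul_one]
  refine ⟨⟨fun n => ((ZMod.unitOfCoprime 3 (coprime3 n))⁻¹ : (ZMod (2 ^ n))ˣ) * (x : P) n,
    compat⟩, ?_⟩
  apply Subtype.ext
  funext n
  show (3 : ℕ) • (((ZMod.unitOfCoprime 3 (coprime3 n))⁻¹ : (ZMod (2 ^ n))ˣ) * (x : P) n)
      = (x : P) n
  rw [nsmul_eq_mul, ← mul_assoc]
  rw [show ((3 : ℕ) : ZMod (2 ^ n)) = (3 : ZMod (2 ^ n)) by push_cast; ring]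
  rw [three_mul_inv n, one_mul]

/-- The element `1` of `Z2`. -/
def oneZ : Z2 := ⟨fun _ => 1, by intro n; rw [map_one]⟩

lemma oneZ_ne_zero : oneZ ≠ 0 := by
  intro h
  have h1 : ((oneZ : Z2) : P) 1 = ((0 : Z2) : P) 1 := by rw [h]
  have : (1 : ZMod (2 ^ 1)) = 0 := h1
  exact absurd this (by decide)


lemma g_haus {J : Type u} (x : J → Z2) (h : ∀ m : ℕ, ∃ y : J → Z2, x = (2 ^ m : ℕ) • y) :
    x = 0 := by
  funext j
  apply z2_haus
  intro m
  obtain ⟨y, hy⟩ := h m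
  exact ⟨y j, by rw [hy]; rfl⟩

lemma g_tf {J : Type u} {j : ℕ} (x : J → Z2) (hx : (2 ^ j : ℕ) • x = 0) : x = 0 := by
  funext j'
  exact z2_tf (x j') (congrFun hx j')

lemma g_div3 {J : Type u} (a : J → Z2) : ∃ b : J → Z2, (3 : ℕ) • b = a := by
  choose b hb using fun j => z2_div3 (a j)
  exact ⟨b, funext fun j => by rw [Pi.smul_apply, hb j]⟩

lemma g_div3pow {J : Type u} : ∀ (k : ℕ) (a : J → Z2), ∃ b : J → Z2, (3 ^ k : ℕ) • b = a
  | 0, a => ⟨a, by simp⟩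
  | (k+1), a => by
      obtain ⟨b, hb⟩ := g_div3 a
      obtain ⟨c, hc⟩ := g_div3pow k b
      refine ⟨c, ?_⟩
      rw [pow_succ', mul_nsmul', hc, hb]

lemma g_hom_zero {J : Type u} (f : (J → Z2) →+ ℤ) : f = 0 := by
  ext a
  simp only [AddMonoidHom.zero_apply]
  by_contra hne
  have hdvd : ∀ k : ℕ, ((3 : ℤ) ^ k) ∣ f a := by
    intro k
    obtain ⟨b, hb⟩ := g_div3pow k a
    refine ⟨f b, ?_⟩
    rw [← hb, map_nsmul, nsmul_eq_mul]
    push_cast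
    ring
  have hle : ∀ k : ℕ, (3 : ℤ) ^ k ≤ |f a| := fun k =>
    Int.le_of_dvd (abs_pos.mpr hne) ((dvd_abs _ _).mpr (hdvd k))
  have hk := hle (f a).natAbs
  rw [Int.abs_eq_natAbs] at hk
  have h2 : ((f a).natAbs : ℤ) < (3 : ℤ) ^ (f a).natAbs := by
    exact_mod_cast (Nat.lt_pow_self (by norm_num : 1 < 3) : (f a).natAbs < 3 ^ (f a).natAbs)
  exact absurd hk (not_le.mpr h2)

end PerpZAux

open PerpZAux in
/-- `{A ∈ Ab : Hom(A,ℤ)=0}` is not decomposable: there is no cardinal `κ`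
such that every abelian group `A` with `Hom(A,ℤ)=0` is the internal direct sum of a family
of subgroups each of cardinality `< κ` and each with trivial homomorphism group into `ℤ`. -/
theorem perpZ_not_decomposable :
    ¬ ∃ κ : Cardinal.{u}, ∀ A : AddCommGrpCat.{u}, (∀ f : ↥A →+ ℤ, f = 0) →
      ∃ (ι : Type u) (Q : ι → AddSubgroup ↥A),
        (∀ i, #↥(Q i) < κ ∧ ∀ f : ↥(Q i) →+ ℤ, f = 0) ∧
        (letI : DecidableEq ι := Classical.decEq ι; DirectSum.IsInternal Q) := by
  classical
  rintro ⟨κ, hκ⟩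
  set μ : Cardinal.{u} := max κ ℵ₀ with hμ
  set J : Type u := μ.out with hJdef
  have hJcard : #J = μ := mk_out μ
  obtain ⟨ι, Q, hQ, hint⟩ := hκ (AddCommGrpCat.of (J → Z2)) (fun f => g_hom_zero f)
  letI : DecidableEq ι := Classical.decEq ι
  letI : DecidableEq (J → Z2) := Classical.decEq _
  have hint' : DirectSum.IsInternal Q := hint
  let Φ : (⨁ i, ↥(Q i)) ≃+ (J → Z2) :=
    AddEquiv.ofBijective (DirectSum.coeAddMonoidHom Q) hint'
  have hΦ : ∀ d, Φ d = DirectSum.coeAddMonoidHom Q d := fun _ => rfl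
  -- the ambient group is big
  have hGbig : (2 : Cardinal.{u}) ^ μ ≤ #(J → Z2) := by
    rw [← hJcard, ← mk_set]
    apply mk_le_of_injective
      (f := fun (T' : Set J) => (fun j => if j ∈ T' then oneZ else 0 : J → Z2))
    intro T1 T2 h12
    ext j
    have hj := congrFun h12 j
    simp only at hj
    by_cases h1 : j ∈ T1 <;> by_cases h2 : j ∈ T2
    · exact iff_of_true h1 h2
    · rw [if_pos h1, if_neg h2] at hj; exact absurd hj oneZ_ne_zero
    · rw [if_neg h1, if_pos h2] at hj; exact absurd hj.symm oneZ_ne_zero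
    · exact iff_of_false h1 h2
  -- infinitely many nonzero pieces
  set T : Set ι := {i | Q i ≠ ⊥} with hTdef
  have hTinf : T.Infinite := by
    by_contra hfin
    rw [Set.not_infinite] at hfin
    haveI : Finite ↥T := hfin.to_subtype
    have hemb : ∀ i : ι, Nonempty (↥(Q i) ↪ J) := by
      intro i
      have hle : #↥(Q i) ≤ #J := by
        rw [hJcard]
        exact le_trans (hQ i).1.le (le_max_left _ _)
      exact (Cardinal.le_def _ _).mp hle
    have Finj : Function.Injective
        (fun (a : J → Z2) (t : ↥T) => (hemb t.1).some (Φ.symm a t.1)) := by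
      intro a b hab
      have hsymm : Φ.symm a = Φ.symm b := by
        apply DFunLike.ext
        intro i
        by_cases hi : Q i = ⊥
        · have h1 : ∀ c : ↥(Q i), c = 0 := by
            rintro ⟨cvl, hcl⟩
            apply Subtype.ext
            rw [hi] at hcl
            simpa using hcl
          rw [h1 (Φ.symm a i), h1 (Φ.symm b i)]
        · have ht := congrFun hab ⟨i, hi⟩
          simp only at ht
          exact (hemb i).some.injective ht
      calc a = Φ (Φ.symm a) := (Φ.apply_symm_apply a).symm
        _ = Φ (Φ.symm b) := by rw [hsymm]
        _ = b := Φ.apply_symm_apply b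
    have c1 : #(J → Z2) ≤ #(↥T → J) := mk_le_of_injective Finj
    have c2 : #(↥T → J) = μ ^ #↥T := by rw [← hJcard]; exact (Cardinal.power_def _ _).symm
    have c3 : μ ^ #↥T ≤ μ :=
      Cardinal.pow_le (le_max_right _ _) (Cardinal.lt_aleph0_of_finite _)
    have hchain : (2 : Cardinal.{u}) ^ μ ≤ μ := le_trans hGbig (le_trans c1 (c2 ▸ c3))
    exact absurd (lt_of_lt_of_le (Cardinal.cantor μ) hchain) (lt_irrefl _)
  -- choose infinitely many nonzero elements in distinct pieces
  let e : ℕ ↪ ↥T := Set.Infinite.natEmbedding T hTinf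
  let idx : ℕ → ι := fun n => (e n).1
  have idx_inj : Function.Injective idx := fun m n h => e.injective (Subtype.ext h)
  have hxe : ∀ n : ℕ, ∃ q : ↥(Q (idx n)), q ≠ 0 := by
    intro n
    by_contra hq
    push_neg at hq
    apply (e n).2
    rw [AddSubgroup.eq_bot_iff_forall]
    intro x hx
    exact congrArg Subtype.val (hq ⟨x, hx⟩)
  choose xe hxe0 using hxe
  let ξ : ℕ → (J → Z2) := fun n => (xe n).1
  have hξ : ∀ n, ξ n ≠ 0 := by
    intro n hzero
    exact hxe0 n (Subtype.ext hzero)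
  -- the 2-adically convergent series
  let s : J → Z2 := fun j => serY (fun k => ξ k j)
  let ytail : ℕ → (J → Z2) := fun m => fun j => serY (fun t => ξ (m + t) j)
  have s_sub : ∀ m : ℕ,
      s - ∑ k ∈ Finset.range m, (2 ^ k : ℕ) • ξ k = (2 ^ m : ℕ) • ytail m := by
    intro m
    funext j
    have hL : (s - ∑ k ∈ Finset.range m, (2 ^ k : ℕ) • ξ k) j
        = serY (fun k => ξ k j) - ∑ k ∈ Finset.range m, (2 ^ k : ℕ) • (ξ k j) := by
      rw [Pi.sub_apply, Finset.sum_apply]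
      congr 1
    rw [hL, serY_sub]
    rfl
  -- projections onto the pieces
  let ev : ∀ i : ι, (⨁ i, ↥(Q i)) →+ ↥(Q i) := fun i =>
    AddMonoidHom.mk' (fun d => d i) (fun x y => DirectSum.add_apply x y i)
  let proj : ι → ((J → Z2) →+ (J → Z2)) := fun i =>
    ((Q i).subtype).comp ((ev i).comp Φ.symm.toAddMonoidHom)
  have hsymm_coe : ∀ (i : ι) (q : ↥(Q i)),
      Φ.symm q.1 = DirectSum.of (fun i => ↥(Q i)) i q := by
    intro i q
    apply Φ.injective
    rw [AddEquiv.apply_symm_apply, hΦ]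
    exact (DirectSum.coeAddMonoidHom_of Q i q).symm
  have proj_xi : ∀ (n m : ℕ), proj (idx m) (ξ n) = if n = m then ξ n else 0 := by
    intro n m
    show ((Q (idx m)).subtype) ((ev (idx m)) (Φ.symm ((xe n).1))) = _
    rw [hsymm_coe (idx n) (xe n)]
    by_cases h : n = m
    · subst h
      show ((DirectSum.of (fun i => ↥(Q i)) (idx n) (xe n)) (idx n)).1 = _
      rw [DirectSum.of_eq_same, if_pos rfl]
    · have hne : idx n ≠ idx m := fun hc => h (idx_inj hc)
      show ((DirectSum.of (fun i => ↥(Q i)) (idx n) (xe n)) (idx m)).1 = _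
      rw [DirectSum.of_eq_of_ne _ _ _ hne.symm, if_neg h]
      rfl
  -- each projection of s is the corresponding term of the series
  have key : ∀ n : ℕ, proj (idx n) s = (2 ^ n : ℕ) • ξ n := by
    intro n
    have hdiff : ∀ m : ℕ, ∃ y : J → Z2,
        proj (idx n) s - (2 ^ n : ℕ) • ξ n = (2 ^ m : ℕ) • y := by
      intro m
      set M := m + (n + 1) with hM
      have hs : s = (∑ k ∈ Finset.range M, (2 ^ k : ℕ) • ξ k) + (2 ^ M : ℕ) • ytail M :=
        sub_eq_iff_eq_add'.mp (s_sub M)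
      have hps : proj (idx n) s
          = (2 ^ n : ℕ) • ξ n + (2 ^ M : ℕ) • proj (idx n) (ytail M) := by
        rw [hs, map_add, map_sum, map_nsmul]
        congr 1
        have hterm : ∀ k, proj (idx n) ((2 ^ k : ℕ) • ξ k)
            = (if k = n then (2 ^ k : ℕ) • ξ k else 0) := by
          intro k
          rw [map_nsmul, proj_xi k n]
          by_cases h : k = n
          · rw [if_pos h, if_pos h]
          · rw [if_neg h, if_neg h, smul_zero]
        rw [Finset.sum_congr rfl fun k _ => hterm k,
          Finset.sum_ite_eq' (Finset.range M) n (fun k => (2 ^ k : ℕ) • ξ k),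
          if_pos (Finset.mem_range.mpr (by omega))]
      refine ⟨(2 ^ (n + 1) : ℕ) • proj (idx n) (ytail M), ?_⟩
      rw [hps, add_sub_cancel_left, smul_smul, ← pow_add]
    have h0 := g_haus _ hdiff
    exact sub_eq_zero.mp h0
  have hnz : ∀ n : ℕ, ((Φ.symm s) (idx n)).1 ≠ (0 : J → Z2) := by
    intro n h0
    have hp : proj (idx n) s = 0 := h0
    rw [key n] at hp
    exact hξ n (g_tf (ξ n) hp)
  have hfs := DirectSum.finite_support Q (Φ.symm s)
  refine (Set.infinite_range_of_injective idx_inj) (hfs.subset ?_)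
  rintro _ ⟨n, rfl⟩
  exact hnz n
end

section
/- For every regular uncountable cardinal $\kappa$ and every prime $p$, there exists an abelian $p$-group $G$ (i.e., an abelian group all of whose elements have order a power of $p$) that is not the internal direct sum of any family of subgroups each of cardinality less than $\kappa$. -/
/-!
Nodes of a tree are the strictly decreasing finite sequences in a well-order `W` of type `κ.ord`,
and `G ⊆ List W →₀ ℚ/ℤ` is generated by elements `y_u` with `p • y_(w :: u) = y_u`; by transfinite
induction the root generator `y_[]` lies in `p^κ.ord G`. Every `x ∈ G` satisfies
`p • x t = ∑ w, x (w :: t)`, so a nonzero coordinate of `p • x` forces a nonzero coordinate of `x`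
at a node of smaller ordinal height; hence `G` has no nonzero subgroup `D = p • D`.

If `G` were a direct sum of subgroups of size `< κ`, some summand `Q` would receive a nonzero
component of `y_[]`, lying in `p^κ.ord Q`. But the descending chain `p^α Q` must stabilise at
some `β < κ.ord`, and then `p^β Q` is a subgroup with `p • p^β Q = p^β Q`, hence zero.
-/

universe u

open Cardinal Pointwise

theorem Antitone.exists_lt_ord_subset_succ {A : Type u} {κ : Cardinal.{u}} (hA : #A < κ)
    {f : Ordinal.{u} → Set A} (hf : Antitone f) : ∃ β < κ.ord, f β ⊆ f (β + 1) := by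
  by_contra! h
  choose x hx hx' using fun b : Set.Iio κ.ord => Set.not_subset.mp (h b.1 b.2)
  have hinj : Function.Injective x := by
    intro b b' hbb'
    by_contra hne
    rcases lt_or_gt_of_ne (Subtype.coe_ne_coe.mpr hne) with hlt | hlt
    · exact hx' b (hf (Order.add_one_le_of_lt hlt) (hbb' ▸ hx b'))
    · exact hx' b' (hf (Order.add_one_le_of_lt hlt) (hbb' ▸ hx b))
  have := Cardinal.lift_mk_le_lift_mk_of_injective hinj
  rw [Cardinal.mk_Iio_ordinal, Cardinal.card_ord, Cardinal.lift_lift, Cardinal.lift_le] at this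
  exact this.not_gt hA

section TransfiniteNSMul

variable {A B : Type*} [AddCommGroup A] [AddCommGroup B]

/-- Fuchs' `n^α A`: `n^0 A = A`, `n^(α+1) A = n • n^α A`, intersections at limit ordinals. -/
def transfiniteNSMul (n : ℕ) (A : Type*) [AddCommGroup A] (α : Ordinal) : AddSubgroup A :=
  ⨅ β : Set.Iio α, n • transfiniteNSMul n A β
termination_by α
decreasing_by exact β.2

theorem mem_transfiniteNSMul_iff {n : ℕ} {α : Ordinal} {x : A} :
    x ∈ transfiniteNSMul n A α ↔ ∀ β < α, x ∈ n • transfiniteNSMul n A β := by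
  rw [transfiniteNSMul]
  simp only [AddSubgroup.mem_iInf, Subtype.forall, Set.mem_Iio]

theorem transfiniteNSMul_le_nsmul {n : ℕ} {β α : Ordinal} (h : β < α) :
    transfiniteNSMul n A α ≤ n • transfiniteNSMul n A β :=
  fun _ hx => mem_transfiniteNSMul_iff.mp hx β h

theorem AddSubgroup.nsmul_le_self (n : ℕ) (H : AddSubgroup A) : n • H ≤ H := by
  rintro _ ⟨x, hx, rfl⟩
  exact H.nsmul_mem hx n

theorem transfiniteNSMul_antitone (n : ℕ) : Antitone (transfiniteNSMul n A) := by
  intro β α h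
  rcases h.lt_or_eq with h | rfl
  · exact (transfiniteNSMul_le_nsmul h).trans (AddSubgroup.nsmul_le_self n _)
  · exact le_rfl

theorem map_transfiniteNSMul_le (f : A →+ B) (n : ℕ) (α : Ordinal) :
    (transfiniteNSMul n A α).map f ≤ transfiniteNSMul n B α := by
  induction α using WellFoundedLT.induction with
  | _ α ih =>
    rintro _ ⟨x, hx, rfl⟩
    refine mem_transfiniteNSMul_iff.mpr fun β hβ => ?_
    obtain ⟨y, hy, rfl⟩ := transfiniteNSMul_le_nsmul hβ hx
    exact ⟨f y, ih β hβ ⟨y, hy, rfl⟩, (map_nsmul f n y).symm⟩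

end TransfiniteNSMul

/-- For a `p`-group `A`, `IsNSMulReduced p A` says that `A` is reduced. -/
def IsNSMulReduced (n : ℕ) (A : Type*) [AddCommGroup A] : Prop :=
  ∀ D : AddSubgroup A, D ≤ n • D → D = ⊥

theorem IsNSMulReduced.of_injective {n : ℕ} {A B : Type*} [AddCommGroup A] [AddCommGroup B]
    (hA : IsNSMulReduced n A) {f : B →+ A} (hf : Function.Injective f) :
    IsNSMulReduced n B := by
  intro D hD
  refine (D.map_eq_bot_iff_of_injective hf).mp (hA _ ?_)
  rintro _ ⟨x, hx, rfl⟩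
  obtain ⟨y, hy, rfl⟩ := hD hx
  exact ⟨f y, ⟨y, hy, rfl⟩, (map_nsmul f n y).symm⟩

theorem IsNSMulReduced.transfiniteNSMul_ord_eq_bot {n : ℕ} {A : Type u} [AddCommGroup A]
    (hA : IsNSMulReduced n A) {κ : Cardinal.{u}} (hcard : #A < κ) :
    transfiniteNSMul n A κ.ord = ⊥ := by
  have hanti : Antitone fun α => (transfiniteNSMul n A α : Set A) :=
    fun _ _ h => SetLike.coe_subset_coe.mpr (transfiniteNSMul_antitone n h)
  obtain ⟨β, hβ, hstable⟩ := hanti.exists_lt_ord_subset_succ hcard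
  have hdiv : transfiniteNSMul n A β ≤ n • transfiniteNSMul n A β :=
    (SetLike.coe_subset_coe.mp hstable).trans (transfiniteNSMul_le_nsmul (lt_add_one β))
  exact le_bot_iff.mp (hA _ hdiv ▸ transfiniteNSMul_antitone n hβ.le)

theorem not_forall_mk_lt_of_isInternal {n : ℕ} {A : Type u} [AddCommGroup A]
    (hA : IsNSMulReduced n A) {κ : Cardinal.{u}} {g : A}
    (hg : g ∈ transfiniteNSMul n A κ.ord) (hg₀ : g ≠ 0) {ι : Type*} [DecidableEq ι]
    {Q : ι → AddSubgroup A} (hQ : DirectSum.IsInternal Q) : ¬ ∀ i, #(Q i) < κ := by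
  intro hsmall
  let e := AddEquiv.ofBijective _ hQ
  have hcomp : ∀ i, e.symm g i = 0 := fun i => by
    let π : A →+ Q i := (DFinsupp.evalAddMonoidHom i).comp e.symm.toAddMonoidHom
    have hπ := map_transfiniteNSMul_le π n κ.ord ⟨g, hg, rfl⟩
    rwa [(hA.of_injective (Q i).subtype_injective).transfiniteNSMul_ord_eq_bot (hsmall i),
      AddSubgroup.mem_bot] at hπ
  exact hg₀ (e.symm.map_eq_zero_iff.mp (DFinsupp.ext hcomp))

structure IsPruferSeq {M : Type*} [AddCommGroup M] (p : ℕ) (c : ℕ → M) : Prop where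
  zero : c 0 = 0
  nsmul_succ : ∀ k, p • c (k + 1) = c k

theorem exists_isPruferSeq {p : ℕ} (hp : 1 < p) :
    ∃ c : ℕ → AddCircle (1 : ℚ), IsPruferSeq p c ∧ c 1 ≠ 0 := by
  have hp₀ : (p : ℚ) ≠ 0 := by positivity
  refine ⟨fun k => (((p : ℚ) ^ k)⁻¹ : ℚ), ⟨?_, fun k => ?_⟩, ?_⟩
  · simp
  · rw [← AddCircle.coe_nsmul, nsmul_eq_mul, pow_succ', mul_inv, mul_inv_cancel_left₀ hp₀]
  · simp only [Ne, pow_one, AddCircle.coe_eq_zero_iff]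
    rintro ⟨m, hm⟩
    have hlt : (p : ℚ)⁻¹ < 1 := inv_lt_one_of_one_lt₀ (by exact_mod_cast hp)
    have hpos : (0 : ℚ) < (p : ℚ)⁻¹ := by positivity
    rw [← hm, zsmul_one] at hlt hpos
    norm_cast at hlt hpos
    omega

noncomputable section

namespace PruferTree

variable {M W : Type*} [AddCommGroup M] {p : ℕ} {c : ℕ → M}

/-- A node of the tree is a list whose head is its newest entry, so its parent is its tail.
`branchElem c u k` puts `c (k + j)` on the `j`-th ancestor of `u`. -/
def branchElem (c : ℕ → M) : List W → ℕ → (List W →₀ M)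
  | [], k => Finsupp.single [] (c k)
  | w :: t, k => Finsupp.single (w :: t) (c k) + branchElem c t (k + 1)

def parentShift : (List W →₀ M) →+ (List W →₀ M) :=
  Finsupp.liftAddHom fun
    | [] => 0
    | _ :: t => Finsupp.singleAddHom t

@[simp]
theorem parentShift_single_nil (a : M) : parentShift (Finsupp.single ([] : List W) a) = 0 := by
  simp [parentShift]

@[simp]
theorem parentShift_single_cons (w : W) (t : List W) (a : M) :
    parentShift (Finsupp.single (w :: t) a) = Finsupp.single t a := by
  simp [parentShift]

theorem exists_cons_ne_zero_of_parentShift_ne_zero {x : List W →₀ M} {t : List W}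
    (h : parentShift x t ≠ 0) : ∃ w, x (w :: t) ≠ 0 := by
  rw [← x.sum_single, map_finsuppSum, Finsupp.sum, Finsupp.finsetSum_apply] at h
  obtain ⟨s, -, hs⟩ := Finset.exists_ne_zero_of_sum_ne_zero h
  match s, hs with
  | [], hs => simp at hs
  | w :: t', hs =>
    rw [parentShift_single_cons] at hs
    obtain rfl : t' = t := by by_contra hne; exact hs (Finsupp.single_eq_of_ne (Ne.symm hne))
    exact ⟨w, by simpa using hs⟩

theorem nsmul_branchElem_succ (hc : IsPruferSeq p c) (u : List W) (k : ℕ) :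
    p • branchElem c u (k + 1) = branchElem c u k := by
  induction u generalizing k with
  | nil => simp [branchElem, hc.nsmul_succ]
  | cons w t ih => simp [branchElem, hc.nsmul_succ, ih]

theorem nsmul_branchElem_cons (hc : IsPruferSeq p c) (w : W) (t : List W) :
    p • branchElem c (w :: t) 1 = branchElem c t 1 := by
  rw [branchElem, smul_add, Finsupp.smul_single, hc.nsmul_succ, hc.zero, Finsupp.single_zero,
    zero_add, nsmul_branchElem_succ hc]

theorem nsmul_branchElem_nil (hc : IsPruferSeq p c) : p • branchElem c ([] : List W) 1 = 0 := by
  rw [branchElem, Finsupp.smul_single, hc.nsmul_succ, hc.zero, Finsupp.single_zero]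

theorem parentShift_branchElem_succ (t : List W) (k : ℕ) :
    parentShift (branchElem c t (k + 1)) + Finsupp.single t (c k) = branchElem c t k := by
  induction t generalizing k with
  | nil => simp [branchElem]
  | cons w t ih =>
    rw [branchElem, branchElem, map_add, parentShift_single_cons, ← ih (k + 1)]
    abel

theorem nsmul_branchElem_eq_parentShift (hc : IsPruferSeq p c) (u : List W) :
    p • branchElem c u 1 = parentShift (branchElem c u 1) := by
  cases u with
  | nil => rw [nsmul_branchElem_nil hc, branchElem, parentShift_single_nil]
  | cons w t =>
    rw [nsmul_branchElem_cons hc, branchElem, map_add, parentShift_single_cons, add_comm,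
      parentShift_branchElem_succ]

theorem pow_length_nsmul_branchElem (hc : IsPruferSeq p c) (u : List W) :
    p ^ (u.length + 1) • branchElem c u 1 = 0 := by
  induction u with
  | nil => simpa using nsmul_branchElem_nil hc
  | cons w t ih => rw [List.length_cons, pow_succ, mul_smul, nsmul_branchElem_cons hc, ih]

theorem branchElem_nil_ne_zero (hc₁ : c 1 ≠ 0) : branchElem c ([] : List W) 1 ≠ 0 := by
  intro h
  exact hc₁ (by simpa [branchElem] using DFunLike.congr_fun h [])

section Chains

variable [LT W]

def chains (W : Type*) [LT W] : Set (List W) := {u | u.IsChain (· < ·)}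

theorem branchElem_mem_supported {u : List W} (hu : u ∈ chains W) (k : ℕ) :
    branchElem c u k ∈ Finsupp.supported M ℤ (chains W) := by
  induction u generalizing k with
  | nil => exact Finsupp.single_mem_supported ℤ _ hu
  | cons w t ih =>
    exact add_mem (Finsupp.single_mem_supported ℤ _ hu) (ih hu.tail _)

def treeGroup (c : ℕ → M) (W : Type*) [LT W] : AddSubgroup (List W →₀ M) :=
  AddSubgroup.closure ((branchElem c · 1) '' chains W)

theorem branchElem_mem_treeGroup {u : List W} (hu : u ∈ chains W) :
    branchElem c u 1 ∈ treeGroup c W :=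
  AddSubgroup.subset_closure ⟨u, hu, rfl⟩

theorem treeGroup_le_supported :
    treeGroup c W ≤ (Finsupp.supported M ℤ (chains W)).toAddSubgroup :=
  (AddSubgroup.closure_le _).mpr <| by
    rintro _ ⟨u, hu, rfl⟩
    exact branchElem_mem_supported hu 1

theorem nsmul_eq_parentShift_of_mem_treeGroup (hc : IsPruferSeq p c) {x : List W →₀ M}
    (hx : x ∈ treeGroup c W) : p • x = parentShift x := by
  induction hx using AddSubgroup.closure_induction with
  | mem _ h =>
    obtain ⟨u, -, rfl⟩ := h
    exact nsmul_branchElem_eq_parentShift hc u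
  | zero => simp
  | add x y _ _ hx hy => rw [smul_add, hx, hy, map_add]
  | neg x _ hx => rw [smul_neg, hx, map_neg]

theorem exists_pow_nsmul_eq_zero_of_mem_treeGroup (hc : IsPruferSeq p c) {x : List W →₀ M}
    (hx : x ∈ treeGroup c W) : ∃ n : ℕ, p ^ n • x = 0 := by
  induction hx using AddSubgroup.closure_induction with
  | mem _ h =>
    obtain ⟨u, -, rfl⟩ := h
    exact ⟨_, pow_length_nsmul_branchElem hc u⟩
  | zero => exact ⟨0, smul_zero _⟩
  | add x y _ _ hx hy =>
    obtain ⟨m, hm⟩ := hx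
    obtain ⟨n, hn⟩ := hy
    refine ⟨m + n, ?_⟩
    rw [smul_add, pow_add, mul_smul, mul_smul, hn, smul_zero, smul_comm, hm, smul_zero, add_zero]
  | neg x _ hx =>
    obtain ⟨n, hn⟩ := hx
    exact ⟨n, by rw [smul_neg, hn, neg_zero]⟩

end Chains

section Height

variable [LinearOrder W] [WellFoundedLT W]

def nodeHeight : List W → Ordinal
  | [] => Ordinal.type (α := W) (· < ·)
  | w :: _ => Ordinal.typein (α := W) (· < ·) w

theorem nodeHeight_cons_lt {w : W} {t : List W} (h : w :: t ∈ chains W) :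
    nodeHeight (w :: t) < nodeHeight t := by
  cases t with
  | nil => exact Ordinal.typein_lt_type _ w
  | cons v r => exact (Ordinal.typein_lt_typein _).mpr (List.isChain_cons_cons.mp h).1

theorem exists_cons_mem_chains_nodeHeight_eq {u : List W} (hu : u ∈ chains W) {γ : Ordinal}
    (hγ : γ < nodeHeight u) : ∃ w, w :: u ∈ chains W ∧ nodeHeight (w :: u) = γ := by
  have hγ' : γ < Ordinal.type (α := W) (· < ·) := by
    cases u with
    | nil => exact hγ
    | cons v r => exact hγ.trans (Ordinal.typein_lt_type _ v)
  obtain ⟨w, rfl⟩ := Ordinal.typein_surj _ hγ'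
  refine ⟨w, ?_, rfl⟩
  cases u with
  | nil => exact List.isChain_singleton w
  | cons v r => exact List.isChain_cons_cons.mpr ⟨(Ordinal.typein_lt_typein _).mp hγ, hu⟩

theorem exists_ne_zero_nodeHeight_lt (hc : IsPruferSeq p c) {x : List W →₀ M}
    (hx : x ∈ treeGroup c W) {t : List W} (ht : (p • x) t ≠ 0) :
    ∃ s, x s ≠ 0 ∧ nodeHeight s < nodeHeight t := by
  rw [nsmul_eq_parentShift_of_mem_treeGroup hc hx] at ht
  obtain ⟨w, hw⟩ := exists_cons_ne_zero_of_parentShift_ne_zero ht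
  have hchain : w :: t ∈ chains W :=
    (Finsupp.mem_supported ℤ x).mp (treeGroup_le_supported hx) (Finsupp.mem_support_iff.mpr hw)
  exact ⟨w :: t, hw, nodeHeight_cons_lt hchain⟩

theorem isNSMulReduced_treeGroup (hc : IsPruferSeq p c) : IsNSMulReduced p (treeGroup c W) := by
  intro D hD
  suffices h : ∀ o, ∀ s : List W, nodeHeight s = o → ∀ x ∈ D, (x : List W →₀ M) s = 0 from
    eq_bot_iff.mpr fun x hx =>
      (AddSubgroup.mem_bot).mpr (Subtype.ext (Finsupp.ext fun s => h _ s rfl x hx))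
  intro o
  induction o using WellFoundedLT.induction with
  | _ o ih =>
    rintro s rfl x hx
    by_contra hne
    obtain ⟨y, hy, rfl⟩ := hD hx
    obtain ⟨s', hs', hlt⟩ := exists_ne_zero_nodeHeight_lt hc y.2 hne
    exact hs' (ih _ hlt s' rfl y hy)

theorem branchElem_mem_transfiniteNSMul (hc : IsPruferSeq p c) (α : Ordinal) {u : List W}
    (hu : u ∈ chains W) (hα : α ≤ nodeHeight u) :
    (⟨branchElem c u 1, branchElem_mem_treeGroup hu⟩ : treeGroup c W) ∈
      transfiniteNSMul p (treeGroup c W) α := by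
  induction α using WellFoundedLT.induction generalizing u with
  | _ α ih =>
    refine mem_transfiniteNSMul_iff.mpr fun γ hγ => ?_
    obtain ⟨w, hw, hwγ⟩ := exists_cons_mem_chains_nodeHeight_eq hu (hγ.trans_le hα)
    exact ⟨_, ih γ hγ hw hwγ.ge, Subtype.ext (nsmul_branchElem_cons hc w u)⟩

end Height

end PruferTree

end

open PruferTree in
theorem exists_pGroup_not_internal_directSum_of_small_subgroups_general
    (κ : Cardinal.{u}) (p : ℕ) (hp : p.Prime) :
    ∃ G : AddCommGrpCat.{u}, (∀ g : ↥G, ∃ n : ℕ, p ^ n • g = 0) ∧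
      ∀ (ι : Type u) [inst : DecidableEq ι], ∀ Q : ι → AddSubgroup ↥G,
        DirectSum.IsInternal Q → ¬ ∀ i, #↥(Q i) < κ := by
  obtain ⟨c, hc, hc₁⟩ := exists_isPruferSeq hp.one_lt
  let W := κ.ord.ToType
  have hroot := branchElem_mem_transfiniteNSMul hc κ.ord (List.isChain_nil : [] ∈ chains W)
    (Ordinal.type_toType κ.ord).ge
  refine ⟨AddCommGrpCat.of (treeGroup c W), fun g => ?_, fun ι _ Q hQ => ?_⟩
  · obtain ⟨n, hn⟩ := exists_pow_nsmul_eq_zero_of_mem_treeGroup hc g.2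
    exact ⟨n, Subtype.ext hn⟩
  · exact not_forall_mk_lt_of_isInternal (isNSMulReduced_treeGroup hc) hroot
      (fun h => branchElem_nil_ne_zero hc₁ (congrArg Subtype.val h)) hQ

/-- For every regular uncountable `κ` and every prime `p` there is an
abelian `p`-group that is not the internal direct sum of any family of subgroups each of
cardinality `< κ`. -/
theorem exists_pGroup_not_internal_directSum_of_small_subgroups
    (κ : Cardinal.{u}) (hreg : κ.IsRegular) (hunc : ℵ₀ < κ) (p : ℕ) (hp : p.Prime) :
    ∃ G : AddCommGrpCat.{u}, (∀ g : ↥G, ∃ n : ℕ, p ^ n • g = 0) ∧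
      ∀ (ι : Type u) [inst : DecidableEq ι], ∀ Q : ι → AddSubgroup ↥G,
        DirectSum.IsInternal Q → ¬ ∀ i, #↥(Q i) < κ :=
  exists_pGroup_not_internal_directSum_of_small_subgroups_general κ p hp
end
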